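/- arXiv:2112.06187 — 4 statements merged into one kernel-verified Lean document; each statement's English description precedes it below -/
import Mathlib

section
/- For all integers m ≥ 3 and n ≥ 0, a_{m+n} = a_{m-1}·a_{n+2} + (a_m - a_{m-1})·a_{n+1} + a_{m-2}·a_n. -/
def narayana : ℕ → ℕ
  | 0 => 0
  | 1 => 1
  | 2 => 1
  | n + 3 => narayana (n + 2) + narayana n

theorem narayana_add_three (n : ℕ) : narayana (n + 3) = narayana (n + 2) + narayana n := rfl

theorem narayana_add (k n : ℕ) :
    narayana (k + n + 3) = narayana (k + 2) * narayana (n + 2) +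
      narayana k * narayana (n + 1) + narayana (k + 1) * narayana n := by
  induction k generalizing n with
  | zero => rw [zero_add, narayana_add_three]; simp [narayana]
  | succ k ih =>
    calc narayana (k + 1 + n + 3) = narayana (k + (n + 1) + 3) := by congr 1; ring
      _ = narayana (k + 2) * narayana (n + 3) + narayana k * narayana (n + 2) +
            narayana (k + 1) * narayana (n + 1) := ih (n + 1)
      _ = narayana (k + 3) * narayana (n + 2) + narayana (k + 1) * narayana (n + 1) +
            narayana (k + 2) * narayana n := by
        rw [narayana_add_three n, narayana_add_three k]; ring

theorem narayana_add' (m n : ℕ) (hm : 3 ≤ m) :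
    narayana (m + n) = narayana (m - 1) * narayana (n + 2) +
      (narayana m - narayana (m - 1)) * narayana (n + 1) +
      narayana (m - 2) * narayana n := by
  obtain ⟨k, rfl⟩ : ∃ k, m = k + 3 := ⟨m - 3, by omega⟩
  have hsub : narayana (k + 3) - narayana (k + 2) = narayana k := by
    rw [narayana_add_three, Nat.add_sub_cancel_left]
  rw [show k + 3 - 1 = k + 2 by omega, show k + 3 - 2 = k + 1 by omega, hsub,
    add_right_comm, narayana_add]
end

section
/- If n ≥ 1 and n ≡ 1, 2, 3, 4, or 6 (mod 8), then a_n is not divisible by 3. -/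
theorem narayana_add_eight_modEq_three (n : ℕ) : narayana (n + 8) ≡ narayana n [MOD 3] := by
  induction n using narayana.induct with
  | case1 | case2 | case3 => decide
  | case4 n ih₂ ih₀ => exact ih₂.add ih₀

theorem narayana_cast_zmod_three_periodic : Function.Periodic (fun n ↦ (narayana n : ZMod 3)) 8 :=
  fun n ↦ (ZMod.natCast_eq_natCast_iff _ _ 3).mpr (narayana_add_eight_modEq_three n)

theorem narayana_not_div_three_general (n : ℕ)
    (h : n % 8 = 1 ∨ n % 8 = 2 ∨ n % 8 = 3 ∨ n % 8 = 4 ∨ n % 8 = 6) :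
    ¬ (3 ∣ narayana n) := by
  rw [← ZMod.natCast_eq_zero_iff, ← narayana_cast_zmod_three_periodic.map_mod_nat n]
  rcases h with h | h | h | h | h <;> rw [h] <;> decide

theorem narayana_not_div_three (n : ℕ) (hn : 1 ≤ n)
    (h : n % 8 = 1 ∨ n % 8 = 2 ∨ n % 8 = 3 ∨ n % 8 = 4 ∨ n % 8 = 6) :
    ¬ (3 ∣ narayana n) :=
  narayana_not_div_three_general n h
end

section
/- If n ≥ 1 and n ≡ 23 (mod 24), then ν_3(a_n) = ν_3(n+1) + 1, where ν_3 denotes the 3-adic valuation. -/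
/-!
Writing `M` for the companion matrix of `x³ - x² - 1`, the Narayana numbers are entries of the
powers of `M`, and `M⁸ = 1 + 3N` for an integer matrix `N` whose bottom-left entry is `2`.
Raising `1 + 3x` to the power `3ʲ t` gives `1 + 3ʲ⁺¹ t x` modulo `3ʲ⁺²`, so whenever
`n + 1 = 8 · 3ʲ t` with `3 ∤ t` we get `aₙ ≡ 2 t 3ʲ⁺¹ (mod 3ʲ⁺²)`, i.e. `ν₃(aₙ) = j + 1`.
-/

lemma padicValInt_pow_mul_of_not_dvd {p k : ℕ} [hp : Fact p.Prime] {b : ℤ}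
    (hb : ¬(p : ℤ) ∣ b) : padicValInt p (p ^ k * b) = k := by
  have hb0 : b ≠ 0 := fun h => hb (h ▸ dvd_zero _)
  rw [padicValInt.mul (pow_ne_zero _ (by exact_mod_cast hp.out.ne_zero)) hb0,
    padicValInt.eq_zero_of_not_dvd hb, ← Nat.cast_pow, padicValInt.of_nat,
    padicValNat.prime_pow, add_zero]

section LiftingTheExponent

variable {A : Type*} [Ring A]

lemma exists_pow_three_eq_one_add_three_pow_smul {x y r : A} {k : ℕ}
    (hy : y = 1 + (3 : ℤ) ^ (k + 1) • (x + (3 : ℤ) • r)) :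
    ∃ r' : A, y ^ 3 = 1 + (3 : ℤ) ^ (k + 2) • (x + (3 : ℤ) • r') := by
  refine ⟨r + (3 : ℤ) ^ k • (x + (3 : ℤ) • r) ^ 2 + (3 : ℤ) ^ (2 * k) • (x + (3 : ℤ) • r) ^ 3, ?_⟩
  have cube (z : A) : (1 + z) ^ 3 = 1 + (3 : ℤ) • z + (3 : ℤ) • z ^ 2 + z ^ 3 := by
    simp only [pow_succ, pow_zero, one_mul, add_mul, mul_add, mul_one]
    match_scalars <;> ring
  rw [hy, cube, smul_pow, smul_pow]
  match_scalars <;> ring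

lemma exists_pow_eq_one_add_three_pow_smul {x y r : A} {k : ℕ}
    (hy : y = 1 + (3 : ℤ) ^ (k + 1) • (x + (3 : ℤ) • r)) (t : ℕ) :
    ∃ s : A, y ^ t = 1 + (3 : ℤ) ^ (k + 1) • ((t : ℤ) • x + (3 : ℤ) • s) := by
  induction t with
  | zero => exact ⟨0, by simp⟩
  | succ t ih =>
    obtain ⟨s, hs⟩ := ih
    refine ⟨s + r + (3 : ℤ) ^ k • (((t : ℤ) • x + (3 : ℤ) • s) * (x + (3 : ℤ) • r)), ?_⟩
    rw [pow_succ, hs, hy]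
    simp only [add_mul, mul_add, one_mul, mul_one, smul_mul_assoc, mul_smul_comm, smul_smul,
      smul_add]
    push_cast
    match_scalars <;> ring

lemma exists_one_add_three_smul_pow_three_pow (x : A) (j : ℕ) :
    ∃ r : A, (1 + (3 : ℤ) • x) ^ 3 ^ j = 1 + (3 : ℤ) ^ (j + 1) • (x + (3 : ℤ) • r) := by
  induction j with
  | zero => exact ⟨0, by simp⟩
  | succ j ih =>
    obtain ⟨r, hr⟩ := ih
    rw [pow_succ, pow_mul]
    exact exists_pow_three_eq_one_add_three_pow_smul hr

lemma exists_one_add_three_smul_pow_three_pow_mul (x : A) (j t : ℕ) :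
    ∃ s : A, (1 + (3 : ℤ) • x) ^ (3 ^ j * t) =
      1 + (3 : ℤ) ^ (j + 1) • ((t : ℤ) • x + (3 : ℤ) • s) := by
  obtain ⟨r, hr⟩ := exists_one_add_three_smul_pow_three_pow x j
  rw [pow_mul]
  exact exists_pow_eq_one_add_three_pow_smul hr t

end LiftingTheExponent

namespace Narayana

def companion : Matrix (Fin 3) (Fin 3) ℤ := !![1, 0, 1; 1, 0, 0; 0, 1, 0]

def companionPowEightDivThree : Matrix (Fin 3) (Fin 3) ℤ := !![4, 2, 3; 3, 1, 2; 2, 1, 1]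

lemma companion_pow_three : companion ^ 3 = companion ^ 2 + 1 := by decide

lemma companion_pow_eight : companion ^ 8 = 1 + (3 : ℤ) • companionPowEightDivThree := by decide

lemma companion_pow_succ_apply (k : ℕ) : (companion ^ (k + 1)) 2 0 = narayana k := by
  induction k using Nat.strong_induction_on with
  | _ k ih =>
    match k with
    | 0 | 1 | 2 => decide
    | k + 3 =>
      have hrec : companion ^ (k + 3 + 1) = companion ^ (k + 2 + 1) + companion ^ (k + 1) := by
        rw [show k + 3 + 1 = (k + 1) + 3 by ring, pow_add, companion_pow_three, mul_add, mul_one,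
          ← pow_add]
      rw [hrec, Matrix.add_apply, ih (k + 2) (by omega), ih k (by omega), narayana]
      push_cast
      ring

lemma exists_narayana_eq (j t n : ℕ) (hn : n + 1 = 8 * (3 ^ j * t)) :
    ∃ s : ℤ, (narayana n : ℤ) = 3 ^ (j + 1) * (2 * t + 3 * s) := by
  obtain ⟨S, hS⟩ := exists_one_add_three_smul_pow_three_pow_mul companionPowEightDivThree j t
  refine ⟨S 2 0, ?_⟩
  rw [← companion_pow_succ_apply, hn, pow_mul, companion_pow_eight, hS]
  simp only [Matrix.add_apply, Matrix.smul_apply, smul_eq_mul]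
  simp [companionPowEightDivThree]
  ring

theorem padicValNat_three_narayana_of_eight_dvd {n : ℕ} (h : 8 ∣ n + 1) :
    padicValNat 3 (narayana n) = padicValNat 3 (n + 1) + 1 := by
  have : Fact (Nat.Prime 3) := ⟨Nat.prime_three⟩
  obtain ⟨q, hq⟩ := h
  obtain ⟨j, t, ht, rfl⟩ := Nat.exists_eq_pow_mul_and_not_dvd (n := q) (by omega) 3 (by norm_num)
  obtain ⟨s, hs⟩ := exists_narayana_eq j t n hq
  have hval (b : ℤ) (hb : ¬(3 : ℤ) ∣ b) (k : ℕ) : padicValInt 3 (3 ^ k * b) = k := by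
    exact_mod_cast padicValInt_pow_mul_of_not_dvd (p := 3) hb
  have hsucc : ((n + 1 : ℕ) : ℤ) = 3 ^ j * (8 * t) := by
    rw [hq]
    push_cast
    ring
  rw [← padicValInt.of_nat, hs, ← padicValInt.of_nat, hsucc, hval _ (by omega), hval _ (by omega)]

end Narayana

theorem narayana_val_23_general (n : ℕ) (h : n % 24 = 23) :
    padicValNat 3 (narayana n) = padicValNat 3 (n + 1) + 1 :=
  Narayana.padicValNat_three_narayana_of_eight_dvd (by omega)

theorem narayana_val_23 (n : ℕ) (hn : 1 ≤ n) (h : n % 24 = 23) :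
    padicValNat 3 (narayana n) = padicValNat 3 (n + 1) + 1 :=
  narayana_val_23_general n h
end

section
/- If n ≥ 1 and n ≡ 16 (mod 24), then ν_3(a_n) = ν_3(n+8) + 2, where ν_3 denotes the 3-adic valuation. -/
section CommRing

variable {R : Type*} [CommRing R]

theorem three_pow_four_dvd_one_add_nine_mul_pow_sub (x : R) (m : ℕ) :
    (3 : R) ^ 4 ∣ (1 + 9 * x) ^ m - (1 + 9 * m * x) := by
  induction m with
  | zero => simp
  | succ m ih =>
    have h : (1 + 9 * x) ^ (m + 1) - (1 + 9 * ↑(m + 1) * x) =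
        ((1 + 9 * x) ^ m - (1 + 9 * m * x)) * (1 + 9 * x) + 3 ^ 4 * (m * x ^ 2) := by
      push_cast; ring
    rw [h]
    exact dvd_add (ih.mul_right _) (dvd_mul_right _ _)

theorem three_pow_dvd_one_add_nine_mul_pow_sub (x : R) (e m : ℕ) :
    (3 : R) ^ (e + 4) ∣ (1 + 9 * x) ^ (3 ^ e * m) - (1 + 3 ^ (e + 2) * m * x) := by
  induction e with
  | zero =>
    simpa [show (3 : R) ^ 2 = 9 by norm_num] using three_pow_four_dvd_one_add_nine_mul_pow_sub x m
  | succ e ih =>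
    obtain ⟨y, hy⟩ := ih
    have hpow : (1 + 9 * x) ^ (3 ^ e * m) = 1 + 3 ^ (e + 2) * (m * x + 9 * y) := by
      linear_combination hy
    refine ⟨y + 3 ^ e * (m * x + 9 * y) ^ 2 + 3 ^ (2 * e + 1) * (m * x + 9 * y) ^ 3, ?_⟩
    rw [show 3 ^ (e + 1) * m = 3 ^ e * m * 3 by ring, pow_mul, hpow]
    ring

end CommRing

theorem padicValNat_eq_of_natCast_eq_pow_mul {p a k : ℕ} [Fact p.Prime] {w : ℤ}
    (h : (a : ℤ) = p ^ k * w) (hw : ¬ (p : ℤ) ∣ w) : padicValNat p a = k := by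
  have hp : (p : ℤ) ^ k ≠ 0 := pow_ne_zero _ (by exact_mod_cast (Fact.out : p.Prime).ne_zero)
  have hw0 : w ≠ 0 := by rintro rfl; exact hw (dvd_zero _)
  rw [← padicValInt.of_nat, h, padicValInt.mul hp hw0, padicValInt.eq_zero_of_not_dvd hw,
    ← Nat.cast_pow, padicValInt.of_nat, padicValNat.prime_pow, add_zero]

namespace narayana

def matrix : Matrix (Fin 3) (Fin 3) ℤ := !![1, 0, 1; 1, 0, 0; 0, 1, 0]

theorem matrix_pow_three : matrix ^ 3 = matrix ^ 2 + 1 := by decide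

theorem eq_matrix_pow_apply : ∀ n, (narayana n : ℤ) = (matrix ^ n) 1 0
  | 0 => rfl
  | 1 => rfl
  | 2 => rfl
  | n + 3 => by
    rw [show matrix ^ (n + 3) = matrix ^ (n + 2) + matrix ^ n by
        rw [pow_add, matrix_pow_three, mul_add, mul_one, ← pow_add],
      Matrix.add_apply, ← eq_matrix_pow_apply (n + 2), ← eq_matrix_pow_apply n, narayana]
    push_cast; rfl

theorem matrix_pow_eight_mul : matrix ^ 8 * !![-2, 3, 0; 0, -2, 3; 3, -3, -2] = 1 := by decide

set_option maxRecDepth 4000 in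
theorem matrix_pow_twentyFour :
    matrix ^ 24 = 1 + 9 * !![655, 305, 447; 447, 208, 305; 305, 142, 208] := by decide

theorem exists_eq_three_pow_mul {n e m : ℕ} (hn : n + 8 = 24 * (3 ^ e * m)) :
    ∃ t : ℤ, (narayana n : ℤ) = 3 ^ (e + 3) * (7 * m + 3 * t) := by
  rw [eq_matrix_pow_apply, ← mul_one (matrix ^ n), ← matrix_pow_eight_mul, ← mul_assoc, ← pow_add,
    hn, pow_mul, matrix_pow_twentyFour]
  set P : Matrix (Fin 3) (Fin 3) ℤ := !![-2, 3, 0; 0, -2, 3; 3, -3, -2]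
  set B : Matrix (Fin 3) (Fin 3) ℤ := !![655, 305, 447; 447, 208, 305; 305, 142, 208]
  obtain ⟨Y, hY⟩ := map_dvd (Polynomial.aeval B)
    (three_pow_dvd_one_add_nine_mul_pow_sub (Polynomial.X : Polynomial ℤ) e m)
  simp only [map_sub, map_add, map_mul, map_pow, map_one, map_ofNat, map_natCast,
    Polynomial.aeval_X] at hY
  have hB :
      (1 + 9 * B) ^ (3 ^ e * m) = 1 + (3 ^ (e + 2) * m : ℤ) • B + (3 ^ (e + 4) : ℤ) • Y := by
    rw [zsmul_eq_mul, zsmul_eq_mul, ← sub_eq_iff_eq_add']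
    push_cast
    exact hY
  have hP : P 1 0 = 0 := rfl
  have hBP : (B * P) 1 0 = 21 := rfl
  rw [hB]
  simp only [add_mul, one_mul, smul_mul_assoc, Matrix.add_apply, Matrix.smul_apply, hP, hBP,
    smul_eq_mul]
  exact ⟨(Y * P) 1 0, by ring⟩

end narayana

theorem narayana_val_16_general (n : ℕ) (h : n % 24 = 16) :
    padicValNat 3 (narayana n) = padicValNat 3 (n + 8) + 2 := by
  obtain ⟨e, m, hm, hs⟩ :=
    Nat.exists_eq_pow_mul_and_not_dvd (n := (n + 8) / 24) (by omega) 3 (by norm_num)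
  have hn : n + 8 = 24 * (3 ^ e * m) := by rw [← hs]; omega
  obtain ⟨t, ht⟩ := narayana.exists_eq_three_pow_mul hn
  rw [padicValNat_eq_of_natCast_eq_pow_mul ht (by push_cast; omega),
    padicValNat_eq_of_natCast_eq_pow_mul (k := e + 1) (w := 8 * m) (by push_cast [hn]; ring)
      (by push_cast; omega)]

theorem narayana_val_16 (n : ℕ) (hn : 1 ≤ n) (h : n % 24 = 16) :
    padicValNat 3 (narayana n) = padicValNat 3 (n + 8) + 2 :=
  narayana_val_16_general n h
end
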